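/- arXiv:2102.02496 — 6 statements merged into one kernel-verified Lean document; each statement's English description precedes it below -/
import Mathlib

section
/- Let n be a natural number, let λ : Fin n → ℝ be a monotone (nondecreasing) family of strictly positive real numbers with ∏ i, λ i = 1, and let p be an index such that λ i ≤ 1 for all i ≤ p and λ i > 1 for all i > p. Then ∑_{i ≤ p} (λ i)² · |ln (λ i)| ≤ (λ p)² · ∑_{i > p} ln (λ i). -/
/-! Since `∏ i, l i = 1`, the logarithms sum to zero, so the right-hand side equals
`(l p)² · ∑_{i ≤ p} (-log (l i))`; compare termwise using `l i ≤ l p` and `log (l i) ≤ 0`. -/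

open Finset Real

lemma Real.sum_log_eq_zero_of_prod_eq_one {ι : Type*} [Fintype ι] {f : ι → ℝ}
    (hf : ∀ i, f i ≠ 0) (h : ∏ i, f i = 1) : ∑ i, log (f i) = 0 := by
  rw [← log_prod fun i _ => hf i, h, log_one]

lemma Finset.sum_filter_le_eq_neg_sum_filter_lt {ι M : Type*} [Fintype ι] [LinearOrder ι]
    [AddCommGroup M] {g : ι → M} (hg : ∑ i, g i = 0) (p : ι) :
    ∑ i ∈ univ.filter (· ≤ p), g i = -∑ i ∈ univ.filter (p < ·), g i := by
  rw [eq_neg_iff_add_eq_zero, ← hg, ← sum_filter_add_sum_filter_not univ (· ≤ p)]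
  simp only [not_le]

lemma Real.sq_mul_abs_log_le_sq_mul_neg_log {x y : ℝ} (hx : 0 < x) (hxy : x ≤ y) (hx1 : x ≤ 1) :
    x ^ 2 * |log x| ≤ y ^ 2 * -log x := by
  rw [abs_of_nonpos (log_nonpos hx.le hx1)]
  gcongr
  exact neg_nonneg.mpr (log_nonpos hx.le hx1)

theorem sum_sq_abs_log_le_lambda_p_sq_mul_sum_log_general
    (n : ℕ) (l : Fin n → ℝ) (p : Fin n)
    (hpos : ∀ i, 0 < l i)
    (hmono : Monotone l)
    (hprod : ∏ i, l i = 1)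
    (hle : ∀ i ≤ p, l i ≤ 1) :
    ∑ i ∈ Finset.univ.filter (fun i => i ≤ p), (l i) ^ 2 * |Real.log (l i)|
      ≤ (l p) ^ 2 * ∑ i ∈ Finset.univ.filter (fun i => p < i), Real.log (l i) := by
  have hlog : ∑ i, log (l i) = 0 :=
    sum_log_eq_zero_of_prod_eq_one (fun i => (hpos i).ne') hprod
  calc ∑ i ∈ univ.filter (· ≤ p), l i ^ 2 * |log (l i)|
      ≤ ∑ i ∈ univ.filter (· ≤ p), l p ^ 2 * -log (l i) := by
        refine sum_le_sum fun i hi => ?_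
        have hip : i ≤ p := (mem_filter.mp hi).2
        exact sq_mul_abs_log_le_sq_mul_neg_log (hpos i) (hmono hip) (hle i hip)
    _ = l p ^ 2 * ∑ i ∈ univ.filter (p < ·), log (l i) := by
        rw [← mul_sum, sum_neg_distrib, sum_filter_le_eq_neg_sum_filter_lt hlog, neg_neg]

theorem sum_sq_abs_log_le_lambda_p_sq_mul_sum_log
    (n : ℕ) (l : Fin n → ℝ) (p : Fin n)
    (hpos : ∀ i, 0 < l i)
    (hmono : Monotone l)
    (hprod : ∏ i, l i = 1)
    (hle : ∀ i ≤ p, l i ≤ 1)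
    (hgt : ∀ i > p, 1 < l i) :
    ∑ i ∈ Finset.univ.filter (fun i => i ≤ p), (l i) ^ 2 * |Real.log (l i)|
      ≤ (l p) ^ 2 * ∑ i ∈ Finset.univ.filter (fun i => p < i), Real.log (l i) :=
  sum_sq_abs_log_le_lambda_p_sq_mul_sum_log_general n l p hpos hmono hprod hle
end

section
/- Let n be a natural number, let λ : Fin n → ℝ be a monotone (nondecreasing) family of strictly positive real numbers with ∏ i, λ i = 1, and let p be an index such that λ i ≤ 1 for all i ≤ p and λ i > 1 for all i > p. Then ∑_{i ≤ p} (λ i)² · |ln (λ i)| ≤ ∑_{i > p} (λ i)² · ln (λ i). -/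
/-! Since `∏ λᵢ = 1`, the logarithms sum to zero, so `∑_{i ≤ p} (-log λᵢ) = ∑_{i > p} log λᵢ`.
The weight `λᵢ²` is at most `1` on the left, where `-log λᵢ ≥ 0`, and at least `1` on the right,
where `log λᵢ ≥ 0`; inserting it can only shrink the left sum and enlarge the right one. -/

open Finset Real

lemma sq_mul_abs_log_le_neg_log {x : ℝ} (hx₀ : 0 ≤ x) (hx₁ : x ≤ 1) :
    x ^ 2 * |log x| ≤ -log x := by
  have hlog : log x ≤ 0 := log_nonpos hx₀ hx₁
  rw [abs_of_nonpos hlog]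
  have hsq : x ^ 2 ≤ 1 := pow_le_one₀ hx₀ hx₁
  nlinarith

lemma log_le_sq_mul_log {x : ℝ} (hx : 1 ≤ x) : log x ≤ x ^ 2 * log x := by
  have hsq : 1 ≤ x ^ 2 := one_le_pow₀ hx
  nlinarith [log_nonneg hx]

lemma sum_filter_neg_log_eq_sum_filter_not_log {ι : Type*} (s : Finset ι) (f : ι → ℝ)
    (hf : ∀ i ∈ s, f i ≠ 0) (hprod : ∏ i ∈ s, f i = 1) (q : ι → Prop) [DecidablePred q] :
    ∑ i ∈ s.filter q, -log (f i) = ∑ i ∈ s.filter (fun i => ¬q i), log (f i) := by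
  have hlog : ∑ i ∈ s, log (f i) = 0 := by
    rw [← log_prod hf, hprod, log_one]
  rw [sum_neg_distrib, neg_eq_iff_add_eq_zero, sum_filter_add_sum_filter_not, hlog]

theorem sum_sq_abs_log_le_sum_sq_log_general
    (n : ℕ) (l : Fin n → ℝ) (p : Fin n)
    (hpos : ∀ i, 0 < l i)
    (hprod : ∏ i, l i = 1)
    (hle : ∀ i ≤ p, l i ≤ 1)
    (hgt : ∀ i > p, 1 < l i) :
    ∑ i ∈ Finset.univ.filter (fun i => i ≤ p), (l i) ^ 2 * |Real.log (l i)|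
      ≤ ∑ i ∈ Finset.univ.filter (fun i => p < i), (l i) ^ 2 * Real.log (l i) := by
  have hbalance := sum_filter_neg_log_eq_sum_filter_not_log univ l
    (fun i _ => (hpos i).ne') hprod (· ≤ p)
  simp only [not_le] at hbalance
  calc ∑ i ∈ univ.filter (· ≤ p), l i ^ 2 * |log (l i)|
      ≤ ∑ i ∈ univ.filter (· ≤ p), -log (l i) :=
        sum_le_sum fun i hi =>
          sq_mul_abs_log_le_neg_log (hpos i).le (hle i (mem_filter.1 hi).2)
    _ = ∑ i ∈ univ.filter (p < ·), log (l i) := hbalance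
    _ ≤ ∑ i ∈ univ.filter (p < ·), l i ^ 2 * log (l i) :=
        sum_le_sum fun i hi => log_le_sq_mul_log (hgt i (mem_filter.1 hi).2).le

theorem sum_sq_abs_log_le_sum_sq_log
    (n : ℕ) (l : Fin n → ℝ) (p : Fin n)
    (hpos : ∀ i, 0 < l i)
    (hmono : Monotone l)
    (hprod : ∏ i, l i = 1)
    (hle : ∀ i ≤ p, l i ≤ 1)
    (hgt : ∀ i > p, 1 < l i) :
    ∑ i ∈ Finset.univ.filter (fun i => i ≤ p), (l i) ^ 2 * |Real.log (l i)|
      ≤ ∑ i ∈ Finset.univ.filter (fun i => p < i), (l i) ^ 2 * Real.log (l i) :=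
  sum_sq_abs_log_le_sum_sq_log_general n l p hpos hprod hle hgt
end

section
/- Let n be a natural number and let λ : Fin n → ℝ be a family of strictly positive real numbers with ∏ i, λ i = 1. Then ∑ i, (λ i)² · ln (λ i) ≥ 0. -/
theorem sum_sq_log_nonneg
    (n : ℕ) (l : Fin n → ℝ)
    (hpos : ∀ i, 0 < l i)
    (hprod : ∏ i, l i = 1) :
    0 ≤ ∑ i, (l i) ^ 2 * Real.log (l i) := by
  have hlog : ∑ i, Real.log (l i) = 0 := by
    rw [← Real.log_prod (fun i _ => (hpos i).ne'), hprod, Real.log_one]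
  have key : ∑ i, (l i) ^ 2 * Real.log (l i)
      = ∑ i, ((l i) ^ 2 - 1) * Real.log (l i) := by
    simp [sub_mul, Finset.sum_sub_distrib, hlog]
  rw [key]
  apply Finset.sum_nonneg
  intro i _
  rcases le_or_gt 1 (l i) with h | h
  · exact mul_nonneg (by nlinarith) (Real.log_nonneg h)
  · have h1 : (l i) ^ 2 - 1 ≤ 0 := by nlinarith [hpos i]
    have h2 : Real.log (l i) ≤ 0 := Real.log_nonpos (hpos i).le h.le
    nlinarith [mul_nonneg (neg_nonneg.2 h1) (neg_nonneg.2 h2)]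
end

section
/- Let n be a natural number and let λ : Fin n → ℝ be a family of strictly positive real numbers with ∏ i, λ i = 1. If ∑ i, (λ i)² · ln (λ i) = 0, then λ i = 1 for every i. -/
theorem sum_sq_log_eq_zero_imp_eq_one
    (n : ℕ) (l : Fin n → ℝ)
    (hpos : ∀ i, 0 < l i)
    (hprod : ∏ i, l i = 1)
    (hsum : ∑ i, (l i) ^ 2 * Real.log (l i) = 0) :
    ∀ i, l i = 1 := by
  have hlog : ∑ i, Real.log (l i) = 0 := by
    rw [← Real.log_prod fun i _ => (hpos i).ne', hprod, Real.log_one]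
  have key : ∑ i, (l i ^ 2 - 1) * Real.log (l i) = 0 := by
    simp only [sub_mul, one_mul, Finset.sum_sub_distrib, hsum, hlog, sub_zero]
  have hnonneg : ∀ i ∈ Finset.univ, 0 ≤ (l i ^ 2 - 1) * Real.log (l i) := by
    intro i _
    rcases le_or_gt 1 (l i) with h | h
    · exact mul_nonneg (by nlinarith) (Real.log_nonneg h)
    · have hlp := Real.log_nonpos (hpos i).le h.le
      have h1 : (0:ℝ) ≤ 1 - l i ^ 2 := by nlinarith [hpos i]
      nlinarith [mul_nonneg h1 (neg_nonneg.mpr hlp)]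
  have hz := (Finset.sum_eq_zero_iff_of_nonneg hnonneg).mp key
  intro i
  rcases mul_eq_zero.mp (hz i (Finset.mem_univ i)) with h | h
  · nlinarith [hpos i]
  · rcases Real.log_eq_zero.mp h with h | h | h
    · exact absurd h (hpos i).ne'
    · exact h
    · nlinarith [hpos i]
end

section
/- Let g be an n × n complex Hermitian positive-definite matrix with det g = 1. Then the sum over the (real) eigenvalues λ₁, …, λₙ of g (counted with multiplicity) of λᵢ² · ln (λᵢ) is nonnegative; equivalently, the trace of g² · log g is nonnegative, where log g is defined by applying the real logarithm to the eigenvalues of g in a spectral decomposition. -/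
open ComplexOrder

theorem trace_sq_log_nonneg
    (n : ℕ) (g : Matrix (Fin n) (Fin n) ℂ)
    (hg : g.IsHermitian) (hpd : g.PosDef)
    (hdet : g.det = 1) :
    0 ≤ ∑ i, (hg.eigenvalues i) ^ 2 * Real.log (hg.eigenvalues i) := by
  have hpos : ∀ i, 0 < hg.eigenvalues i := fun i => by
    exact hpd.eigenvalues_pos i
  have hprod : ∏ i, hg.eigenvalues i = 1 := by
    have h := hg.det_eq_prod_eigenvalues
    rw [hdet] at h
    have : ((∏ i, hg.eigenvalues i : ℝ) : ℂ) = 1 := by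
      rw [Complex.ofReal_prod]; exact h.symm
    exact_mod_cast this
  have hlogsum : ∑ i, Real.log (hg.eigenvalues i) = 0 := by
    rw [← Real.log_prod fun i _ => (hpos i).ne', hprod, Real.log_one]
  have key : ∀ i, 0 ≤ ((hg.eigenvalues i) ^ 2 - 1) * Real.log (hg.eigenvalues i) := by
    intro i
    rcases le_or_gt 1 (hg.eigenvalues i) with h | h
    · exact mul_nonneg (by nlinarith) (Real.log_nonneg h)
    · have hl := Real.log_nonpos (hpos i).le h.le
      have h2 : hg.eigenvalues i ^ 2 - 1 ≤ 0 := by nlinarith [hpos i]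
      have := mul_nonneg (neg_nonneg.2 h2) (neg_nonneg.2 hl); linarith [neg_mul_neg (hg.eigenvalues i ^ 2 - 1) (Real.log (hg.eigenvalues i))]
  calc (0:ℝ) ≤ ∑ i, ((hg.eigenvalues i) ^ 2 - 1) * Real.log (hg.eigenvalues i) :=
        Finset.sum_nonneg fun i _ => key i
    _ = ∑ i, (hg.eigenvalues i) ^ 2 * Real.log (hg.eigenvalues i)
          - ∑ i, Real.log (hg.eigenvalues i) := by
        rw [← Finset.sum_sub_distrib]; congr 1; ext i; ring
    _ = ∑ i, (hg.eigenvalues i) ^ 2 * Real.log (hg.eigenvalues i) := by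
        rw [hlogsum, sub_zero]
end

section
/- Let g be an n × n complex Hermitian positive-definite matrix with det g = 1. If the sum over the (real) eigenvalues λ₁, …, λₙ of g (counted with multiplicity) of λᵢ² · ln (λᵢ) equals 0 (equivalently, tr(g² · log g) = 0), then g is the identity matrix. -/
open ComplexOrder

theorem trace_sq_log_eq_zero_imp_identity
    (n : ℕ) (g : Matrix (Fin n) (Fin n) ℂ)
    (hg : g.IsHermitian) (hpd : g.PosDef)
    (hdet : g.det = 1)
    (hsum : ∑ i, (hg.eigenvalues i) ^ 2 * Real.log (hg.eigenvalues i) = 0) :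
    g = 1 := by
  have hpos : ∀ i, 0 < hg.eigenvalues i := fun i => hpd.eigenvalues_pos i
  -- product of eigenvalues = 1
  have hprod : ∏ i, hg.eigenvalues i = 1 := by
    have := hg.det_eq_prod_eigenvalues
    rw [hdet] at this
    have : ((∏ i, hg.eigenvalues i : ℝ) : ℂ) = ((1:ℝ):ℂ) := by push_cast; simpa using this.symm
    exact_mod_cast this
  have hlogsum : ∑ i, Real.log (hg.eigenvalues i) = 0 := by
    rw [← Real.log_prod (fun i _ => (hpos i).ne'), hprod, Real.log_one]
  have hsum2 : ∑ i, (hg.eigenvalues i ^ 2 - 1) * Real.log (hg.eigenvalues i) = 0 := by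
    simp only [sub_mul, one_mul, Finset.sum_sub_distrib, hsum, hlogsum, sub_zero]
  have hnonneg : ∀ i ∈ Finset.univ,
      0 ≤ (hg.eigenvalues i ^ 2 - 1) * Real.log (hg.eigenvalues i) := by
    intro i _
    rcases le_or_gt 1 (hg.eigenvalues i) with h | h
    · exact mul_nonneg (by nlinarith) (Real.log_nonneg h)
    · have h1 : hg.eigenvalues i ^ 2 - 1 ≤ 0 := by nlinarith [hpos i]
      have h2 : Real.log (hg.eigenvalues i) ≤ 0 := Real.log_nonpos (hpos i).le h.le
      nlinarith [mul_nonneg (neg_nonneg.mpr h1) (neg_nonneg.mpr h2)]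
  have heach := (Finset.sum_eq_zero_iff_of_nonneg hnonneg).mp hsum2
  have heig : ∀ i, hg.eigenvalues i = 1 := by
    intro i
    have h := heach i (Finset.mem_univ i)
    by_contra hne
    rcases lt_or_gt_of_ne hne with h1 | h1
    · have hl : Real.log (hg.eigenvalues i) < 0 := Real.log_neg (hpos i) h1
      have hs : hg.eigenvalues i ^ 2 - 1 < 0 := by nlinarith [hpos i]
      nlinarith
    · have hl : 0 < Real.log (hg.eigenvalues i) := Real.log_pos h1
      have hs : 0 < hg.eigenvalues i ^ 2 - 1 := by nlinarith
      nlinarith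
  have hdiag : Matrix.diagonal (RCLike.ofReal ∘ hg.eigenvalues : Fin n → ℂ) = 1 := by
    ext i j
    simp [Matrix.diagonal, heig i, Matrix.one_apply]
  calc g = _ := hg.spectral_theorem
    _ = 1 := by
      rw [hdiag]
      exact map_one _
end
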